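/- Let f : [0,∞)^n → R be absolutely symmetric (invariant under permutations), μ > 0, and A = U Σ_A V^T the singular value decomposition of A ∈ R^{m×n} with Σ_A = diag(σ_A). Then Z* = U diag(σ*) V^T, where σ* minimizes σ ↦ f(σ) + (μ/2)||σ − σ_A||₂² over σ ≥ 0, is an optimal solution of min_Z f(σ(Z)) + (μ/2)||Z − A||_F². -/

import Mathlib

open Matrix

noncomputable def singularValues {m n : ℕ} (A : Matrix (Fin m) (Fin n) ℝ) : Fin n → ℝ :=
  fun i => Real.sqrt ((Matrix.isHermitian_conjTranspose_mul_self A).eigenvalues i)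

noncomputable def frobSq {m n : ℕ} (A : Matrix (Fin m) (Fin n) ℝ) : ℝ := ∑ i, ∑ j, (A i j)^2

/-- Rectangular diagonal m×n matrix with diagonal entries σ. -/
noncomputable def rectDiag {m n : ℕ} (σ : Fin n → ℝ) : Matrix (Fin m) (Fin n) ℝ :=
  fun i j => if (i : ℕ) = (j : ℕ) then σ j else 0

/-!
Conjugating by the orthogonal factors `U`, `V` changes neither `f ∘ σ` nor the Frobenius distance,
so it suffices to compare `W = Uᵀ Z V` with the rectangular diagonal matrix `diag σ_A`. There the
Hoffman–Wielandt bound `‖σ(W) - σ_A‖² ≤ ‖W - diag σ_A‖²` (with `σ(W)` sorted decreasingly) shows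
that the objective at `Z` dominates the vector objective at `σ(Z)`, hence its value at `σ*`, which
`Z* = U diag(σ*) Vᵀ` attains. Expanding both squares, Hoffman–Wielandt is the von Neumann trace
inequality `∑ σ_A,i W_ii ≤ ∑ σ_A,i σ_i(W)`. For it, write `W = Q diag(σ(W)) Rᵀ` with `R` orthogonal
and `Q` a partial isometry; then `2 Q_ik R_ik ≤ Q_ik² + R_ik²` bounds each `W_ii` by an average of
the `σ_k(W)` with doubly substochastic weights, and Abel summation against the decreasing `σ_A`
finishes.
-/

open Finset Polynomial

section Rearrangement
variable {ι R : Type*} [LinearOrder ι] [CommRing R] [LinearOrder R] [IsStrictOrderedRing R]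

theorem Finset.sum_mul_nonneg_of_antitoneOn (s : Finset ι) {a c : ι → R}
    (ha : AntitoneOn a s) (ha0 : ∀ i ∈ s, 0 ≤ a i)
    (hc : ∀ k ∈ s, 0 ≤ ∑ i ∈ s with i ≤ k, c i) :
    0 ≤ ∑ i ∈ s, a i * c i := by
  induction s using Finset.induction_on_max generalizing a with
  | empty => simp
  | insert M s hlt ih =>
    have hM : M ∉ s := fun h => lt_irrefl _ (hlt M h)
    have hsplit : ∑ i ∈ insert M s, a i * c i =
        ∑ i ∈ s, (a i - a M) * c i + a M * ∑ i ∈ insert M s, c i := by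
      simp only [sum_insert hM, sub_mul, sum_sub_distrib, mul_add, mul_sum]
      ring
    have hprefix : ∀ k ∈ s, {i ∈ insert M s | i ≤ k} = {i ∈ s | i ≤ k} := fun k hk => by
      rw [filter_insert, if_neg (hlt k hk).not_ge]
    rw [hsplit]
    refine add_nonneg (ih ?_ ?_ ?_) (mul_nonneg (ha0 M (mem_insert_self M s)) ?_)
    · exact fun i hi j hj hij =>
        sub_le_sub_right (ha (mem_insert_of_mem hi) (mem_insert_of_mem hj) hij) _
    · exact fun i hi => sub_nonneg.2 <|
        ha (mem_insert_of_mem hi) (mem_insert_self M s) (hlt i hi).le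
    · intro k hk
      rw [← hprefix k hk]
      exact hc k (mem_insert_of_mem hk)
    · have hle : ∀ i ∈ insert M s, i ≤ M := fun i hi =>
        (mem_insert.1 hi).elim le_of_eq fun h => (hlt i h).le
      simpa [filter_true_of_mem hle] using hc M (mem_insert_self M s)

variable [Fintype ι] [LocallyFiniteOrderBot ι]

theorem sum_mul_nonneg_of_antitone {a c : ι → R} (ha : Antitone a) (ha0 : ∀ i, 0 ≤ a i)
    (hc : ∀ k, 0 ≤ ∑ i ∈ Iic k, c i) : 0 ≤ ∑ i, a i * c i :=
  univ.sum_mul_nonneg_of_antitoneOn (ha.antitoneOn _) (fun i _ => ha0 i)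
    fun k _ => by simpa [filter_ge_eq_Iic] using hc k

theorem sum_mul_le_sum_Iic_of_sum_le_card {b t : ι → R} (hb : Antitone b) (k : ι)
    (hbk : 0 ≤ b k) (ht0 : ∀ j, 0 ≤ t j) (ht1 : ∀ j, t j ≤ 1) (hsum : ∑ j, t j ≤ #(Iic k)) :
    ∑ j, b j * t j ≤ ∑ j ∈ Iic k, b j := by
  -- `b k` bounds `b` from below on `Iic k` and from above off it.
  have hterm : ∀ j, b j * t j - (if j ≤ k then b j else 0) ≤
      b k * (t j - if j ≤ k then 1 else 0) := fun j => by
    split_ifs with hj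
    · nlinarith [hb hj, ht1 j]
    · nlinarith [hb (le_of_not_ge hj), ht0 j]
  have := sum_le_sum fun j (_ : j ∈ univ) => hterm j
  simp only [sum_sub_distrib, ← mul_sum, sum_ite, sum_const_zero, add_zero, sum_const,
    filter_ge_eq_Iic, nsmul_one] at this
  nlinarith

theorem sum_sum_mul_mul_le_of_doublySubstochastic {a b : ι → R} (ha : Antitone a)
    (ha0 : ∀ i, 0 ≤ a i) (hb : Antitone b) (hb0 : ∀ i, 0 ≤ b i) {P : Matrix ι ι R}
    (hP0 : ∀ i j, 0 ≤ P i j) (hrow : ∀ i, ∑ j, P i j ≤ 1) (hcol : ∀ j, ∑ i, P i j ≤ 1) :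
    ∑ i, ∑ j, a i * P i j * b j ≤ ∑ i, a i * b i := by
  have hprefix : ∀ k, 0 ≤ ∑ i ∈ Iic k, (b i - ∑ j, P i j * b j) := fun k => by
    have hsum : ∑ j, ∑ i ∈ Iic k, P i j ≤ #(Iic k) := by
      rw [sum_comm, ← nsmul_one, ← sum_const]
      exact sum_le_sum fun i _ => hrow i
    have := sum_mul_le_sum_Iic_of_sum_le_card hb k (hb0 k) (fun j => sum_nonneg fun i _ => hP0 i j)
      (fun j => (sum_le_sum_of_subset_of_nonneg (subset_univ _) fun i _ _ => hP0 i j).trans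
        (hcol j)) hsum
    rw [sum_sub_distrib, sub_nonneg, sum_comm]
    simpa only [mul_sum, mul_comm] using this
  have := sum_mul_nonneg_of_antitone ha ha0 hprefix
  simpa only [mul_sub, sum_sub_distrib, mul_sum, mul_assoc, sub_nonneg] using this

end Rearrangement

section Matrices

variable {m n : ℕ}

theorem exists_perm_eq_comp_of_map_univ_eq {α : Type*} [LinearOrder α] {f g : Fin n → α}
    (h : univ.val.map f = univ.val.map g) : ∃ e : Equiv.Perm (Fin n), f = g ∘ e := by
  have hsorted : f ∘ Tuple.sort f = g ∘ Tuple.sort g := by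
    refine List.ofFn_injective <| List.Perm.eq_of_sortedLE (Tuple.monotone_sort f).sortedLE_ofFn
      (Tuple.monotone_sort g).sortedLE_ofFn ?_
    rw [← Multiset.coe_eq_coe, ← Fin.univ_val_map, ← Fin.univ_val_map,
      ← Multiset.map_map, Multiset.map_univ_val_equiv, ← Multiset.map_map,
      Multiset.map_univ_val_equiv, h]
  refine ⟨(Tuple.sort f).symm.trans (Tuple.sort g), funext fun i => ?_⟩
  simpa using congr_fun hsorted ((Tuple.sort f).symm i)

theorem Matrix.IsHermitian.exists_perm_eigenvalues_eq_of_charpoly_eq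
    {B : Matrix (Fin n) (Fin n) ℝ} (hB : B.IsHermitian) {g : Fin n → ℝ}
    (h : B.charpoly = ∏ i, (X - C (g i))) : ∃ e : Equiv.Perm (Fin n), hB.eigenvalues = g ∘ e := by
  apply exists_perm_eq_comp_of_map_univ_eq
  have := hB.roots_charpoly_eq_eigenvalues
  rw [h, roots_prod _ _ (prod_ne_zero_iff.2 fun i _ => X_sub_C_ne_zero (g i))] at this
  simpa using this.symm

theorem Matrix.IsHermitian.exists_orthogonal_antitone_diagonalization
    {B : Matrix (Fin n) (Fin n) ℝ} (hB : B.IsHermitian) :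
    ∃ (R : Matrix (Fin n) (Fin n) ℝ) (p : Equiv.Perm (Fin n)), Rᵀ * R = 1 ∧ R * Rᵀ = 1 ∧
      Antitone (hB.eigenvalues ∘ p) ∧ B = R * diagonal (hB.eigenvalues ∘ p) * Rᵀ := by
  set E : Matrix (Fin n) (Fin n) ℝ := (hB.eigenvectorUnitary : Matrix (Fin n) (Fin n) ℝ)
  have hEE : Eᵀ * E = 1 := by
    simpa [E, star_eq_conjTranspose] using Unitary.coe_star_mul_self hB.eigenvectorUnitary
  have hEE' : E * Eᵀ = 1 := by
    simpa [E, star_eq_conjTranspose] using Unitary.coe_mul_star_self hB.eigenvectorUnitary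
  have hB' : B = E * diagonal hB.eigenvalues * Eᵀ := by
    conv_lhs => rw [hB.spectral_theorem]
    simp [E, Unitary.conjStarAlgAut_apply, star_eq_conjTranspose]
  set p := Fin.revPerm.trans (Tuple.sort hB.eigenvalues)
  refine ⟨E.submatrix id p, p, ?_, ?_, ?_, ?_⟩
  · rw [transpose_submatrix, ← submatrix_mul _ _ _ _ _ Function.bijective_id, hEE,
      submatrix_one_equiv]
  · rw [transpose_submatrix, submatrix_mul_equiv, hEE', submatrix_id_id]
  · exact fun i j hij => Tuple.monotone_sort hB.eigenvalues (Fin.rev_le_rev.2 hij)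
  · rw [← submatrix_diagonal_equiv, transpose_submatrix, submatrix_mul_equiv,
      submatrix_mul_equiv, submatrix_id_id, ← hB']

theorem sum_sq_row_le_one_of_mul_transpose_mul {ι κ : Type*} [Fintype ι] [Fintype κ]
    {Q : Matrix ι κ ℝ} (hQ : Q * Qᵀ * Q = Q) (j : ι) : ∑ k, Q j k ^ 2 ≤ 1 := by
  set P := Q * Qᵀ
  have hPP : P * P = P := by rw [← Matrix.mul_assoc, hQ]
  have hPjj : P j j = ∑ k, Q j k ^ 2 := by simp [P, mul_apply, sq]
  have hPsq : P j j = ∑ l, P j l ^ 2 := by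
    conv_lhs => rw [← hPP]
    simp only [mul_apply, sq]
    refine sum_congr rfl fun l _ => ?_
    congr 1
    simp only [P, mul_apply, transpose_apply, mul_comm]
  have hle : P j j ^ 2 ≤ P j j := hPsq ▸ single_le_sum (fun l _ => sq_nonneg (P j l)) (mem_univ j)
  have h0 : 0 ≤ P j j := hPjj ▸ sum_nonneg fun k _ => sq_nonneg _
  rw [← hPjj]
  nlinarith

theorem exists_partialIsometry_svd (W : Matrix (Fin m) (Fin n) ℝ) :
    ∃ (Q : Matrix (Fin m) (Fin n) ℝ) (R : Matrix (Fin n) (Fin n) ℝ) (p : Equiv.Perm (Fin n)),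
      Q * Qᵀ * Q = Q ∧ Rᵀ * R = 1 ∧ R * Rᵀ = 1 ∧ Antitone (singularValues W ∘ p) ∧
      W = Q * diagonal (singularValues W ∘ p) * Rᵀ := by
  have hH := isHermitian_conjTranspose_mul_self W
  obtain ⟨R, p, hRR, hRR', hanti, hWW⟩ := hH.exists_orthogonal_antitone_diagonalization
  set d := singularValues W ∘ p
  have hd_sq : ∀ k, d k ^ 2 = hH.eigenvalues (p k) := fun k =>
    Real.sq_sqrt (eigenvalues_conjTranspose_mul_self_nonneg W _)
  set G := W * R
  have hGG : Gᵀ * G = diagonal fun k => d k ^ 2 := by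
    simp only [conjTranspose_eq_transpose_of_trivial] at hWW
    calc Gᵀ * G = Rᵀ * (Wᵀ * W) * R := by simp only [G, transpose_mul, Matrix.mul_assoc]
      _ = (Rᵀ * R) * diagonal (hH.eigenvalues ∘ p) * (Rᵀ * R) := by
        rw [hWW]; simp only [Matrix.mul_assoc]
      _ = diagonal fun k => d k ^ 2 := by simp [hRR, hd_sq]
  have hG_col : ∀ j k, d k = 0 → G j k = 0 := fun j k hk => by
    have hcol : ∑ i, G i k * G i k = 0 := by
      simpa [mul_apply, hk] using congr_fun₂ hGG k k
    exact mul_self_eq_zero.1 <|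
      (sum_eq_zero_iff_of_nonneg fun i _ => mul_self_nonneg (G i k)).1 hcol j (mem_univ j)
  -- Zero singular values give zero columns of `G`, so the junk value `0⁻¹ = 0` is harmless.
  set Q := G * diagonal fun k => (d k)⁻¹
  have hGQ : G = Q * diagonal d := by
    ext j k
    by_cases hk : d k = 0
    · simp [Q, hk, hG_col j k hk]
    · simp [Q, hk]
  refine ⟨Q, R, p, ?_, hRR, hRR', fun i j hij => Real.sqrt_le_sqrt (hanti hij), ?_⟩
  · calc Q * Qᵀ * Q
        = G * (diagonal (fun k => (d k)⁻¹) * diagonal (fun k => (d k)⁻¹) * (Gᵀ * G) *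
            diagonal fun k => (d k)⁻¹) := by
          simp only [Q, transpose_mul, diagonal_transpose, Matrix.mul_assoc]
      _ = Q := by
          rw [hGG, diagonal_mul_diagonal, diagonal_mul_diagonal, diagonal_mul_diagonal]
          congr 2
          funext k
          by_cases hk : d k = 0
          · simp [hk]
          · field_simp
  · rw [← hGQ, Matrix.mul_assoc, hRR', Matrix.mul_one]

theorem frobSq_eq_trace (M : Matrix (Fin m) (Fin n) ℝ) : frobSq M = trace (Mᵀ * M) := by
  rw [frobSq, sum_comm]
  simp [trace, Matrix.mul_apply, sq]

theorem frobSq_mul_mul_transpose {U : Matrix (Fin m) (Fin m) ℝ} {V : Matrix (Fin n) (Fin n) ℝ}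
    (hU : Uᵀ * U = 1) (hV : Vᵀ * V = 1) (M : Matrix (Fin m) (Fin n) ℝ) :
    frobSq (U * M * Vᵀ) = frobSq M := by
  have : (U * M * Vᵀ)ᵀ * (U * M * Vᵀ) = V * (Mᵀ * (Uᵀ * U) * M) * Vᵀ := by
    simp only [transpose_mul, transpose_transpose, Matrix.mul_assoc]
  rw [frobSq_eq_trace, frobSq_eq_trace, this, hU, Matrix.mul_one, trace_mul_cycle,
    ← Matrix.mul_assoc, hV, Matrix.one_mul]

theorem frobSq_sub (X Y : Matrix (Fin m) (Fin n) ℝ) :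
    frobSq (X - Y) = frobSq X - 2 * ∑ i, ∑ j, X i j * Y i j + frobSq Y := by
  simp only [frobSq, Matrix.sub_apply, sub_sq, sum_add_distrib, sum_sub_distrib, mul_sum, mul_assoc]

theorem sum_sq_singularValues (M : Matrix (Fin m) (Fin n) ℝ) :
    ∑ i, singularValues M i ^ 2 = frobSq M := by
  have hH := isHermitian_conjTranspose_mul_self M
  simp only [singularValues, Real.sq_sqrt (eigenvalues_conjTranspose_mul_self_nonneg M _)]
  rw [frobSq_eq_trace, ← conjTranspose_eq_transpose_of_trivial, hH.trace_eq_sum_eigenvalues]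
  simp

theorem rectDiag_apply (hmn : n ≤ m) (σ : Fin n → ℝ) (i : Fin m) (j : Fin n) :
    (rectDiag σ : Matrix (Fin m) (Fin n) ℝ) i j = if i = Fin.castLE hmn j then σ j else 0 := by
  simp [rectDiag, Fin.ext_iff]

theorem rectDiag_sub (σ τ : Fin n → ℝ) :
    (rectDiag (σ - τ) : Matrix (Fin m) (Fin n) ℝ) = rectDiag σ - rectDiag τ := by
  ext i j
  by_cases h : (i : ℕ) = j <;> simp [rectDiag, h]

theorem sum_sum_mul_rectDiag (hmn : n ≤ m) (X : Matrix (Fin m) (Fin n) ℝ) (σ : Fin n → ℝ) :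
    ∑ i, ∑ j, X i j * (rectDiag σ : Matrix (Fin m) (Fin n) ℝ) i j =
      ∑ j, σ j * X (Fin.castLE hmn j) j := by
  rw [sum_comm]
  simp [rectDiag_apply hmn, mul_comm]

theorem frobSq_rectDiag (hmn : n ≤ m) (σ : Fin n → ℝ) :
    frobSq (rectDiag σ : Matrix (Fin m) (Fin n) ℝ) = ∑ j, σ j ^ 2 := by
  simp only [frobSq, sq, sum_sum_mul_rectDiag hmn]
  simp [rectDiag_apply hmn]

theorem transpose_rectDiag_mul_rectDiag (hmn : n ≤ m) (σ : Fin n → ℝ) :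
    (rectDiag σ : Matrix (Fin m) (Fin n) ℝ)ᵀ * (rectDiag σ : Matrix (Fin m) (Fin n) ℝ) =
      diagonal fun j => σ j ^ 2 := by
  ext k l
  by_cases hkl : k = l <;> simp [Matrix.mul_apply, rectDiag_apply hmn, sq, hkl, eq_comm]

theorem singularValues_mul_mul_transpose {U : Matrix (Fin m) (Fin m) ℝ}
    {V : Matrix (Fin n) (Fin n) ℝ} (hU : Uᵀ * U = 1) (hV : Vᵀ * V = 1)
    (M : Matrix (Fin m) (Fin n) ℝ) : singularValues (U * M * Vᵀ) = singularValues M := by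
  have hgram : (U * M * Vᵀ)ᴴ * (U * M * Vᵀ) = V * (Mᴴ * M) * Vᵀ := by
    simp only [conjTranspose_eq_transpose_of_trivial, transpose_mul, transpose_transpose,
      Matrix.mul_assoc, ← Matrix.mul_assoc Uᵀ U, hU, Matrix.one_mul]
  have hcharpoly : ((U * M * Vᵀ)ᴴ * (U * M * Vᵀ)).charpoly = (Mᴴ * M).charpoly := by
    rw [hgram, charpoly_mul_comm, ← Matrix.mul_assoc, hV, Matrix.one_mul]
  funext i
  exact congrArg Real.sqrt <| congr_fun ((IsHermitian.eigenvalues_eq_eigenvalues_iff _ _).2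
    hcharpoly) i

theorem exists_perm_singularValues_rectDiag (hmn : n ≤ m) {σ : Fin n → ℝ} (hσ : ∀ i, 0 ≤ σ i) :
    ∃ e : Equiv.Perm (Fin n), singularValues (rectDiag σ : Matrix (Fin m) (Fin n) ℝ) = σ ∘ e := by
  have hcharpoly : ((rectDiag σ : Matrix (Fin m) (Fin n) ℝ)ᴴ *
      (rectDiag σ : Matrix (Fin m) (Fin n) ℝ)).charpoly = ∏ i, (X - C (σ i ^ 2)) := by
    rw [conjTranspose_eq_transpose_of_trivial, transpose_rectDiag_mul_rectDiag hmn,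
      charpoly_diagonal]
  obtain ⟨e, he⟩ :=
    (isHermitian_conjTranspose_mul_self _).exists_perm_eigenvalues_eq_of_charpoly_eq hcharpoly
  refine ⟨e, funext fun i => ?_⟩
  simp only [singularValues, he, Function.comp_apply, Real.sqrt_sq (hσ (e i))]

theorem exists_perm_sum_mul_diag_le_sum_mul_singularValues (hmn : n ≤ m)
    (W : Matrix (Fin m) (Fin n) ℝ) {σ : Fin n → ℝ} (hσ : Antitone σ) (hσ0 : ∀ i, 0 ≤ σ i) :
    ∃ p : Equiv.Perm (Fin n),
      ∑ i, σ i * W (Fin.castLE hmn i) i ≤ ∑ i, σ i * singularValues W (p i) := by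
  obtain ⟨Q, R, p, hQ, hRR, hRR', hanti, hW⟩ := exists_partialIsometry_svd W
  set d := singularValues W ∘ p
  have hd0 : ∀ k, 0 ≤ d k := fun k => Real.sqrt_nonneg _
  have hQrow := sum_sq_row_le_one_of_mul_transpose_mul hQ
  have hQcol : ∀ k, ∑ j, Q j k ^ 2 ≤ 1 := sum_sq_row_le_one_of_mul_transpose_mul (Q := Qᵀ) <| by
    simpa only [transpose_mul, transpose_transpose, Matrix.mul_assoc] using congrArg transpose hQ
  have hRrow : ∀ i, ∑ k, R i k ^ 2 = 1 := fun i => by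
    simpa [Matrix.mul_apply, sq] using congr_fun₂ hRR' i i
  have hRcol : ∀ k, ∑ i, R i k ^ 2 = 1 := fun k => by
    simpa [Matrix.mul_apply, sq] using congr_fun₂ hRR k k
  set P : Matrix (Fin n) (Fin n) ℝ := fun i k => (Q (Fin.castLE hmn i) k ^ 2 + R i k ^ 2) / 2
  have hamgm : ∀ i, σ i * W (Fin.castLE hmn i) i ≤ ∑ k, σ i * P i k * d k := fun i => by
    rw [hW, Matrix.mul_apply, mul_sum]
    refine sum_le_sum fun k _ => ?_
    have := mul_le_mul_of_nonneg_left (two_mul_le_add_sq (Q (Fin.castLE hmn i) k) (R i k))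
      (mul_nonneg (hσ0 i) (hd0 k))
    simp only [P, mul_diagonal, transpose_apply]
    linarith
  have hProw : ∀ i, ∑ k, P i k ≤ 1 := fun i => by
    simp only [P, ← sum_div, sum_add_distrib]
    linarith [hQrow (Fin.castLE hmn i), hRrow i]
  have hPcol : ∀ k, ∑ i, P i k ≤ 1 := fun k => by
    have : ∑ i, Q (Fin.castLE hmn i) k ^ 2 ≤ ∑ j, Q j k ^ 2 :=
      (sum_map univ (Fin.castLEEmb hmn) fun j => Q j k ^ 2).symm.trans_le <|
        sum_le_sum_of_subset_of_nonneg (subset_univ _) fun j _ _ => sq_nonneg _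
    simp only [P, ← sum_div, sum_add_distrib]
    linarith [hQcol k, hRcol k]
  refine ⟨p, (sum_le_sum fun i _ => hamgm i).trans ?_⟩
  exact sum_sum_mul_mul_le_of_doublySubstochastic hσ hσ0 hanti hd0
    (fun i k => by positivity) hProw hPcol

theorem exists_perm_sum_sq_sub_le_frobSq_sub_rectDiag (hmn : n ≤ m)
    (W : Matrix (Fin m) (Fin n) ℝ) {σ : Fin n → ℝ} (hσ : Antitone σ) (hσ0 : ∀ i, 0 ≤ σ i) :
    ∃ p : Equiv.Perm (Fin n),
      ∑ i, (singularValues W (p i) - σ i) ^ 2 ≤ frobSq (W - rectDiag σ) := by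
  obtain ⟨p, hp⟩ := exists_perm_sum_mul_diag_le_sum_mul_singularValues hmn W hσ hσ0
  refine ⟨p, ?_⟩
  have hsq : ∑ i, singularValues W (p i) ^ 2 = frobSq W := by
    rw [Equiv.sum_comp p fun i => singularValues W i ^ 2, sum_sq_singularValues]
  rw [frobSq_sub, sum_sum_mul_rectDiag hmn, frobSq_rectDiag hmn]
  simp only [sub_sq, sum_add_distrib, sum_sub_distrib, mul_assoc, ← mul_sum,
    mul_comm (singularValues W _)]
  linarith

end Matrices

/-- If A = U Σ_A Vᵀ is an SVD of A and σ* minimizes σ ↦ f(σ) + (μ/2)||σ - σ_A||² over σ ≥ 0,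
then Z* = U diag(σ*) Vᵀ minimizes Z ↦ f(σ(Z)) + (μ/2)||Z - A||_F² for any absolutely
symmetric f. -/
theorem spectral_prox_solution {m n : ℕ} (hmn : n ≤ m)
    (f : (Fin n → ℝ) → ℝ)
    (hsym : ∀ (e : Equiv.Perm (Fin n)) (σ : Fin n → ℝ), f (σ ∘ e) = f σ)
    (μ : ℝ) (hμ : 0 < μ)
    (A : Matrix (Fin m) (Fin n) ℝ)
    (U : Matrix (Fin m) (Fin m) ℝ) (V : Matrix (Fin n) (Fin n) ℝ)
    (hU : Uᵀ * U = 1) (hU' : U * Uᵀ = 1) (hV : Vᵀ * V = 1) (hV' : V * Vᵀ = 1)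
    (σA : Fin n → ℝ) (hσA : ∀ i, 0 ≤ σA i) (hσAsorted : Antitone σA)
    (hA : A = U * (rectDiag σA : Matrix (Fin m) (Fin n) ℝ) * Vᵀ)
    (σstar : Fin n → ℝ) (hstar_nonneg : ∀ i, 0 ≤ σstar i)
    (hstar : ∀ σ : Fin n → ℝ, (∀ i, 0 ≤ σ i) →
      f σstar + (μ/2) * ∑ i, (σstar i - σA i)^2 ≤ f σ + (μ/2) * ∑ i, (σ i - σA i)^2) :
    ∀ Z : Matrix (Fin m) (Fin n) ℝ,
      f (singularValues (U * (rectDiag σstar : Matrix (Fin m) (Fin n) ℝ) * Vᵀ)) +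
        (μ/2) * frobSq (U * (rectDiag σstar : Matrix (Fin m) (Fin n) ℝ) * Vᵀ - A) ≤
      f (singularValues Z) + (μ/2) * frobSq (Z - A) := by
  intro Z
  obtain ⟨W, rfl⟩ : ∃ W, Z = U * W * Vᵀ := ⟨Uᵀ * Z * V, by
    rw [← Matrix.mul_assoc, ← Matrix.mul_assoc, hU', Matrix.one_mul, Matrix.mul_assoc, hV',
      Matrix.mul_one]⟩
  have hsub (M : Matrix (Fin m) (Fin n) ℝ) : U * M * Vᵀ - A = U * (M - rectDiag σA) * Vᵀ := by
    rw [hA, Matrix.mul_sub, Matrix.sub_mul]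
  obtain ⟨e, he⟩ := exists_perm_singularValues_rectDiag (m := m) hmn hstar_nonneg
  obtain ⟨p, hp⟩ := exists_perm_sum_sq_sub_le_frobSq_sub_rectDiag hmn W hσAsorted hσA
  rw [hsub, hsub, ← rectDiag_sub, frobSq_mul_mul_transpose hU hV, frobSq_mul_mul_transpose hU hV,
    frobSq_rectDiag hmn, singularValues_mul_mul_transpose hU hV,
    singularValues_mul_mul_transpose hU hV, he, hsym]
  calc f σstar + μ / 2 * ∑ i, (σstar - σA) i ^ 2
      ≤ f (singularValues W ∘ p) + μ / 2 * ∑ i, (singularValues W (p i) - σA i) ^ 2 :=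
        hstar _ fun i => Real.sqrt_nonneg _
    _ ≤ f (singularValues W) + μ / 2 * frobSq (W - rectDiag σA) := by
        rw [hsym]
        gcongr
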